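/- arXiv:1605.04970 — 5 statements merged into one kernel-verified Lean document; each statement's English description precedes it below -/
import Mathlib

section
/- For any two subgraphs γ₁ and γ₂ of a finite graph Γ, the first Betti numbers satisfy ℓ(γ₁) + ℓ(γ₂) ≤ ℓ(γ₁ ∩ γ₂) + ℓ(γ₁ ∪ γ₂), where ℓ(γ) denotes the dimension of the first homology (cycle rank) of γ. -/
/-- A finite multigraph on vertex type `V` with edge type `E` is given by an
endpoint map `G : E → Sym2 V`. -/
structure Subgraph {V E : Type} [Fintype V] [Fintype E] [DecidableEq V] [DecidableEq E]
    (G : E → Sym2 V) where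
  verts : Finset V
  edges : Finset E
  incl : ∀ e ∈ edges, ∀ v ∈ G e, v ∈ verts

variable {V E : Type} [Fintype V] [Fintype E] [DecidableEq V] [DecidableEq E]

/-- Number of connected components of a subgraph. -/
noncomputable def comps (G : E → Sym2 V) (H : Subgraph G) : ℕ :=
  Nat.card (Quot fun a b : {v : V // v ∈ H.verts} => ∃ e ∈ H.edges, G e = s(a.1, b.1))

/-- Cycle rank (first Betti number) `ℓ(H) = |E(H)| - |V(H)| + c(H)`. -/
noncomputable def cycleRank (G : E → Sym2 V) (H : Subgraph G) : ℤ :=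
  (H.edges.card : ℤ) - (H.verts.card : ℤ) + (comps G H : ℤ)

/-- Union of subgraphs (vertex- and edge-wise). -/
def Subgraph.union (G : E → Sym2 V) (H K : Subgraph G) : Subgraph G where
  verts := H.verts ∪ K.verts
  edges := H.edges ∪ K.edges
  incl := by
    intro e he v hv
    rcases Finset.mem_union.mp he with h | h
    · exact Finset.mem_union_left _ (H.incl e h v hv)
    · exact Finset.mem_union_right _ (K.incl e h v hv)

/-- Intersection of subgraphs (vertex- and edge-wise). -/
def Subgraph.inter (G : E → Sym2 V) (H K : Subgraph G) : Subgraph G where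
  verts := H.verts ∩ K.verts
  edges := H.edges ∩ K.edges
  incl := by
    intro e he v hv
    have h1 := Finset.mem_inter.mp he
    exact Finset.mem_inter.mpr ⟨H.incl e h1.1 v hv, K.incl e h1.2 v hv⟩

/-!
The cycle rank is the nullity of the boundary vectors of the edges: with
`∂e = δ_u - δ_v ∈ ℚ^V` for an edge `e = uv`, `ℓ(γ) = |E(γ)| - dim span ∂(E(γ))`.
Indeed, the coboundary map `ℚ^V → ℚ^{E(γ)}`, `f ↦ (f u - f v)_e`, has rank
`dim span ∂(E(γ))`, and its kernel consists of the functions that are constant on each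
component of `γ` and arbitrary off `V(γ)`, so rank–nullity gives `rank + c(γ) = |V(γ)|`.
Now `|E|` is modular, while the rank is submodular:
`span ∂(E(γ₁ ∩ γ₂)) ≤ span ∂(E(γ₁)) ⊓ span ∂(E(γ₂))` and
`dim (A ⊔ B) + dim (A ⊓ B) = dim A + dim B`.
-/

open Module Submodule Matrix

theorem finrank_span_image_union_add_inter_le {K M ι : Type*} [DivisionRing K] [AddCommGroup M]
    [Module K M] [DecidableEq ι] (f : ι → M) (s t : Finset ι) :
    finrank K (span K (f '' ↑(s ∪ t))) + finrank K (span K (f '' ↑(s ∩ t))) ≤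
      finrank K (span K (f '' ↑s)) + finrank K (span K (f '' ↑t)) := by
  have := FiniteDimensional.span_of_finite K (s.finite_toSet.image f)
  have := FiniteDimensional.span_of_finite K (t.finite_toSet.image f)
  have h_union : span K (f '' ↑(s ∪ t)) = span K (f '' ↑s) ⊔ span K (f '' ↑t) := by
    rw [Finset.coe_union, Set.image_union, span_union]
  have h_inter : span K (f '' ↑(s ∩ t)) ≤ span K (f '' ↑s) ⊓ span K (f '' ↑t) :=
    le_inf (span_mono (Set.image_mono (by simp))) (span_mono (Set.image_mono (by simp)))
  calc _ ≤ finrank K ↥(span K (f '' ↑s) ⊔ span K (f '' ↑t)) +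
          finrank K ↥(span K (f '' ↑s) ⊓ span K (f '' ↑t)) :=
        h_union ▸ Nat.add_le_add_left (finrank_mono h_inter) _
    _ = _ := finrank_sup_add_finrank_inf_eq _ _

namespace Subgraph

variable (G : E → Sym2 V)

/-- `δ_u - δ_v`, for the orientation `(u, v)` of `G e` picked by `Quot.out`. -/
noncomputable def boundary (e : E) : V → ℚ :=
  Pi.single (G e).out.1 1 - Pi.single (G e).out.2 1

variable (H : Subgraph G)

abbrev Adj (a b : {v : V // v ∈ H.verts}) : Prop :=
  ∃ e ∈ H.edges, G e = s(a.1, b.1)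

lemma out_mem_verts {e : E} (he : e ∈ H.edges) :
    (G e).out.1 ∈ H.verts ∧ (G e).out.2 ∈ H.verts :=
  ⟨H.incl e he _ (G e).out_fst_mem, H.incl e he _ (G e).out_snd_mem⟩

noncomputable def incidenceMatrix : Matrix {e : E // e ∈ H.edges} V ℚ := fun e => boundary G e.1

lemma incidenceMatrix_mulVec (f : V → ℚ) (e : {e : E // e ∈ H.edges}) :
    (incidenceMatrix G H *ᵥ f) e = f (G e.1).out.1 - f (G e.1).out.2 := by
  simp only [mulVec, incidenceMatrix, boundary, sub_dotProduct, single_dotProduct, one_mul]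

lemma Adj.apply_eq_of_mulVec_eq_zero {f : V → ℚ} (hf : incidenceMatrix G H *ᵥ f = 0)
    {a b : {v : V // v ∈ H.verts}} (hab : Adj G H a b) : f a = f b := by
  obtain ⟨e, he, hG⟩ := hab
  have h_diff : f (G e).out.1 = f (G e).out.2 := by
    simpa [incidenceMatrix_mulVec, sub_eq_zero] using congrFun hf ⟨e, he⟩
  have h_ends : s((G e).out.1, (G e).out.2) = s(a.1, b.1) := (Quot.out_eq _).trans hG
  rcases Sym2.eq_iff.mp h_ends with ⟨h₁, h₂⟩ | ⟨h₁, h₂⟩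
  · rwa [h₁, h₂] at h_diff
  · rw [h₁, h₂] at h_diff
    exact h_diff.symm

noncomputable def extendByComponents :
    (({v : V // v ∉ H.verts} → ℚ) × (Quot (Adj G H) → ℚ)) →ₗ[ℚ] (V → ℚ) where
  toFun x v := if hv : v ∈ H.verts then x.2 (Quot.mk _ ⟨v, hv⟩) else x.1 ⟨v, hv⟩
  map_add' x y := by funext v; by_cases hv : v ∈ H.verts <;> simp [hv]
  map_smul' c x := by funext v; by_cases hv : v ∈ H.verts <;> simp [hv]

lemma extendByComponents_injective : Function.Injective (extendByComponents G H) := by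
  intro x y hxy
  ext ⟨v, hv⟩
  · simpa [extendByComponents, hv] using congrFun hxy v
  · simpa [extendByComponents, hv] using congrFun hxy v

lemma range_extendByComponents :
    LinearMap.range (extendByComponents G H) = LinearMap.ker (incidenceMatrix G H).mulVecLin := by
  ext f
  rw [LinearMap.mem_range, LinearMap.mem_ker, mulVecLin_apply]
  constructor
  · rintro ⟨x, rfl⟩
    funext ⟨e, he⟩
    obtain ⟨h₁, h₂⟩ := out_mem_verts G H he
    have h_comp : Quot.mk (Adj G H) ⟨_, h₁⟩ = Quot.mk _ ⟨_, h₂⟩ :=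
      Quot.sound ⟨e, he, (Quot.out_eq (G e)).symm⟩
    simp [incidenceMatrix_mulVec, extendByComponents, h₁, h₂, h_comp]
  · intro hf
    refine ⟨(fun v => f v,
      Quot.lift (fun v => f v) fun _ _ => Adj.apply_eq_of_mulVec_eq_zero G H hf), ?_⟩
    funext v
    by_cases hv : v ∈ H.verts <;> simp [extendByComponents, hv]

lemma rank_incidenceMatrix_add_comps : (incidenceMatrix G H).rank + comps G H = H.verts.card := by
  have : Fintype (Quot (Adj G H)) := Fintype.ofFinite _
  have h_ker : finrank ℚ (LinearMap.ker (incidenceMatrix G H).mulVecLin) =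
      (Fintype.card V - H.verts.card) + comps G H := by
    rw [← range_extendByComponents,
      LinearMap.finrank_range_of_inj (extendByComponents_injective G H), finrank_prod,
      finrank_pi, finrank_pi, comps, Nat.card_eq_fintype_card,
      Fintype.card_subtype_compl, Fintype.card_coe]
  have h_rank_nullity := LinearMap.finrank_range_add_finrank_ker (incidenceMatrix G H).mulVecLin
  rw [h_ker, finrank_pi] at h_rank_nullity
  have := H.verts.card_le_univ
  unfold Matrix.rank
  omega

lemma rank_incidenceMatrix :
    (incidenceMatrix G H).rank = finrank ℚ (span ℚ (boundary G '' H.edges)) := by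
  rw [rank_eq_finrank_span_row, Set.image_eq_range]
  rfl

lemma cycleRank_eq_card_sub_finrank_span :
    cycleRank G H = H.edges.card - finrank ℚ (span ℚ (boundary G '' H.edges)) := by
  have h_rank := rank_incidenceMatrix_add_comps G H
  rw [rank_incidenceMatrix] at h_rank
  rw [cycleRank]
  omega

end Subgraph

/-- Submodularity of the cycle rank: `ℓ(γ₁) + ℓ(γ₂) ≤ ℓ(γ₁ ∩ γ₂) + ℓ(γ₁ ∪ γ₂)`. -/
theorem cycleRank_submodular (G : E → Sym2 V) (γ₁ γ₂ : Subgraph G) :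
    cycleRank G γ₁ + cycleRank G γ₂ ≤
      cycleRank G (Subgraph.inter G γ₁ γ₂) + cycleRank G (Subgraph.union G γ₁ γ₂) := by
  simp only [Subgraph.cycleRank_eq_card_sub_finrank_span, Subgraph.inter, Subgraph.union]
  have h_card := Finset.card_inter_add_card_union γ₁.edges γ₂.edges
  have h_rank := finrank_span_image_union_add_inter_le (K := ℚ) (Subgraph.boundary G)
    γ₁.edges γ₂.edges
  omega
end

section
/- Integration by parts identity: for polynomials P₁, P₂ positive on [0,1]ⁿ, c, d ∈ ℂ, and Re(a₁) > 0, one has (a₁+1) ∫_{[0,1]ⁿ} P₁^c P₂^d t₁^{a₁} t₂^{a₂}⋯t_n^{a_n} dt = ∫_{[0,1]^{n-1}} [P₁^c P₂^d t₁^{a₁+1} t₂^{a₂}⋯t_n^{a_n}]_{t₁=0}^{t₁=1} dt₂⋯dt_n − ∫_{[0,1]ⁿ} (c P₁^{c−1} (∂P₁/∂t₁) P₂^d + d P₁^c (∂P₂/∂t₁) P₂^{d−1}) t₁^{a₁+1} t₂^{a₂}⋯t_n^{a_n} dt, provided Re(a_i) > 0 for all i. -/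
/-! Since `t₀ ^ a₀` is the derivative of `t₀ ^ (a₀ + 1) / (a₀ + 1)`, integrating by parts in `t₀`
proves the identity on every fibre `t₀ ↦ Fin.cons t₀ t'` of the cube. As all `Re aᵢ > 0`, every
integrand is continuous on the closed cube, so Fubini's theorem glues the fibrewise identities
together. -/

open MeasureTheory MvPolynomial Set

theorem hasDerivAt_eval_cons {𝕜 : Type*} [NontriviallyNormedField 𝕜] {n : ℕ}
    (P : MvPolynomial (Fin (n + 1)) 𝕜) (t' : Fin n → 𝕜) (y : 𝕜) :
    HasDerivAt (fun x => eval (Fin.cons x t') P) (eval (Fin.cons y t') (pderiv 0 P)) y := by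
  induction P using MvPolynomial.induction_on with
  | C a => simpa using hasDerivAt_const y a
  | add p q hp hq => simp only [map_add]; exact hp.add hq
  | mul_X p i hp =>
    induction i using Fin.cases with
    | zero =>
      simp only [map_mul, eval_X, Fin.cons_zero, pderiv_mul, pderiv_X_self, map_add, mul_one]
      have h := hp.mul (hasDerivAt_id' y)
      rw [mul_one] at h
      exact h
    | succ j =>
      simp only [map_mul, eval_X, Fin.cons_succ, pderiv_mul, pderiv_X_of_ne (Fin.succ_ne_zero j),
        mul_zero, add_zero]
      exact hp.mul_const (t' j)

theorem HasDerivAt.ofReal_cpow_const {f : ℝ → ℝ} {f' x : ℝ} (hf : HasDerivAt f f' x)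
    (hx : 0 < f x) (c : ℂ) :
    HasDerivAt (fun y => (f y : ℂ) ^ c) (c * (f x : ℂ) ^ (c - 1) * f') x := by
  exact (Complex.hasStrictDerivAt_cpow_const (Complex.ofReal_mem_slitPlane.2 hx)).hasDerivAt.comp
    x hf.ofReal_comp

theorem ContinuousOn.ofReal_cpow_const {X : Type*} [TopologicalSpace X] {f : X → ℝ} {s : Set X}
    (hf : ContinuousOn f s) (hpos : ∀ x ∈ s, 0 < f x) (c : ℂ) :
    ContinuousOn (fun x => (f x : ℂ) ^ c) s :=
  (Complex.continuous_ofReal.comp_continuousOn hf).cpow_const fun x hx =>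
    Complex.ofReal_mem_slitPlane.2 (hpos x hx)

namespace MeasureTheory

variable {α E : Type*} [MeasurableSpace α] [NormedAddCommGroup E] {n : ℕ}

theorem finCons_eq_piFinSuccAbove_symm :
    (fun p : α × (Fin n → α) => (Fin.cons p.1 p.2 : Fin (n + 1) → α)) =
      (MeasurableEquiv.piFinSuccAbove (fun _ => α) 0).symm := by
  ext p : 1
  simp [MeasurableEquiv.piFinSuccAbove_symm_apply, Fin.insertNthEquiv, Fin.insertNth_zero']

theorem measurableEmbedding_finCons :
    MeasurableEmbedding fun p : α × (Fin n → α) => (Fin.cons p.1 p.2 : Fin (n + 1) → α) := by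
  rw [finCons_eq_piFinSuccAbove_symm]; exact MeasurableEquiv.measurableEmbedding _

variable (μ : Fin (n + 1) → Measure α) [∀ i, SigmaFinite (μ i)]

theorem measurePreserving_finCons :
    MeasurePreserving (fun p : α × (Fin n → α) => (Fin.cons p.1 p.2 : Fin (n + 1) → α))
      ((μ 0).prod (Measure.pi fun j => μ j.succ)) (Measure.pi μ) := by
  have h := (measurePreserving_piFinSuccAbove μ 0).symm
  simp only [Fin.zero_succAbove] at h
  rwa [finCons_eq_piFinSuccAbove_symm]

variable {μ} {f : (Fin (n + 1) → α) → E}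

theorem Integrable.comp_finCons (hf : Integrable f (Measure.pi μ)) :
    Integrable (fun p : α × (Fin n → α) => f (Fin.cons p.1 p.2))
      ((μ 0).prod (Measure.pi fun j => μ j.succ)) :=
  ((measurePreserving_finCons μ).integrable_comp_emb measurableEmbedding_finCons).2 hf

theorem integral_pi_eq_integral_integral_finCons [NormedSpace ℝ E]
    (hf : Integrable f (Measure.pi μ)) :
    ∫ t, f t ∂Measure.pi μ = ∫ t', ∫ x, f (Fin.cons x t') ∂μ 0 ∂Measure.pi fun j => μ j.succ := by
  rw [← (measurePreserving_finCons μ).integral_comp measurableEmbedding_finCons,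
    integral_prod_symm _ hf.comp_finCons]

theorem Integrable.integral_finCons [NormedSpace ℝ E] (hf : Integrable f (Measure.pi μ)) :
    Integrable (fun t' => ∫ x, f (Fin.cons x t') ∂μ 0) (Measure.pi fun j => μ j.succ) :=
  hf.comp_finCons.integral_prod_right

theorem volume_restrict_Icc_eq_pi {ι : Type*} [Fintype ι] (a b : ι → ℝ) :
    volume.restrict (Icc a b) = Measure.pi fun i => volume.restrict (Icc (a i) (b i)) := by
  rw [← pi_univ_Icc, volume_pi, Measure.restrict_pi_pi]

variable [NormedSpace ℝ E] {f : (Fin (n + 1) → ℝ) → E} {a b : Fin (n + 1) → ℝ}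

theorem setIntegral_Icc_eq_integral_integral_finCons (hf : IntegrableOn f (Icc a b)) :
    ∫ t in Icc a b, f t =
      ∫ t' in Icc (Fin.tail a) (Fin.tail b), ∫ x in Icc (a 0) (b 0), f (Fin.cons x t') := by
  rw [IntegrableOn, volume_restrict_Icc_eq_pi] at hf
  rw [volume_restrict_Icc_eq_pi, integral_pi_eq_integral_integral_finCons hf,
    volume_restrict_Icc_eq_pi]
  rfl

theorem IntegrableOn.setIntegral_Icc_finCons (hf : IntegrableOn f (Icc a b)) :
    IntegrableOn (fun t' => ∫ x in Icc (a 0) (b 0), f (Fin.cons x t'))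
      (Icc (Fin.tail a) (Fin.tail b)) := by
  rw [IntegrableOn, volume_restrict_Icc_eq_pi] at hf ⊢
  exact hf.integral_finCons

end MeasureTheory

theorem integral_Icc_mul_ofReal_cpow_by_parts {u u' : ℝ → ℂ} {a : ℂ} (ha : -1 < a.re)
    (hu : ContinuousOn u (Icc 0 1)) (hu' : ContinuousOn u' (Icc 0 1))
    (hderiv : ∀ x ∈ Ioo (0 : ℝ) 1, HasDerivAt u (u' x) x) :
    (a + 1) * ∫ x in Icc (0 : ℝ) 1, u x * (x : ℂ) ^ a =
      (u 1 * 1 ^ (a + 1) - u 0 * 0 ^ (a + 1)) - ∫ x in Icc (0 : ℝ) 1, u' x * (x : ℂ) ^ (a + 1) := by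
  have ha1 : 0 < (a + 1).re := by simp only [Complex.add_re, Complex.one_re]; linarith
  have hpow : ContinuousOn (fun x : ℝ => (x : ℂ) ^ (a + 1)) (Icc 0 1) :=
    (Complex.continuous_ofReal_cpow_const ha1).continuousOn
  have hintu' : IntegrableOn (fun x => u' x * (x : ℂ) ^ (a + 1)) (Icc 0 1) :=
    (hu'.mul hpow).integrableOn_compact isCompact_Icc
  have hintu : IntegrableOn (fun x => u x * (x : ℂ) ^ a) (Icc 0 1) := by
    refine IntegrableOn.continuousOn_mul hu ?_ isCompact_Icc
    rw [integrableOn_Icc_iff_integrableOn_Ioc,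
      ← intervalIntegrable_iff_integrableOn_Ioc_of_le zero_le_one]
    exact intervalIntegral.intervalIntegrable_cpow' ha
  have hFTC : ∫ x in (0 : ℝ)..1, (u' x * (x : ℂ) ^ (a + 1) + (a + 1) * (u x * (x : ℂ) ^ a)) =
      u 1 * ((1 : ℝ) : ℂ) ^ (a + 1) - u 0 * ((0 : ℝ) : ℂ) ^ (a + 1) := by
    refine intervalIntegral.integral_eq_sub_of_hasDerivAt_of_le zero_le_one (hu.mul hpow)
      (fun x hx => ?_) ?_
    · have hx0 : (x : ℂ) ∈ Complex.slitPlane := Complex.ofReal_mem_slitPlane.2 hx.1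
      refine ((hderiv x hx).mul (Complex.hasStrictDerivAt_cpow_const (c := a + 1)
        hx0).hasDerivAt.comp_ofReal).congr_deriv ?_
      rw [add_sub_cancel_right]
      ring
    · rw [intervalIntegrable_iff_integrableOn_Icc_of_le zero_le_one]
      exact hintu'.add (hintu.const_mul (a + 1))
  rw [intervalIntegral.integral_of_le zero_le_one, ← integral_Icc_eq_integral_Ioc,
    integral_add hintu' (hintu.const_mul _), integral_const_mul] at hFTC
  push_cast at hFTC
  linear_combination hFTC

theorem Fin.cons_mem_Icc {α : Type*} [Preorder α] {n : ℕ} {x : α} {p : Fin n → α}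
    {q₁ q₂ : Fin (n + 1) → α} :
    (Fin.cons x p : Fin (n + 1) → α) ∈ Icc q₁ q₂ ↔
      x ∈ Icc (q₁ 0) (q₂ 0) ∧ p ∈ Icc (Fin.tail q₁) (Fin.tail q₂) := by
  simp only [mem_Icc, Fin.le_cons, Fin.cons_le]
  tauto

theorem mapsTo_finCons_Icc {n : ℕ} {t' : Fin n → ℝ} (ht' : t' ∈ Icc 0 1) :
    MapsTo (fun x : ℝ => (Fin.cons x t' : Fin (n + 1) → ℝ)) (Icc 0 1) (Icc 0 1) :=
  fun _ hx => Fin.cons_mem_Icc.2 ⟨hx, ht'⟩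

theorem integral_unitCube_mul_cpow_by_parts {n : ℕ} {u u' : (Fin (n + 1) → ℝ) → ℂ}
    {w : (Fin n → ℝ) → ℂ} {a : ℂ} (ha : 0 < a.re)
    (hu : ContinuousOn u (Icc 0 1)) (hu' : ContinuousOn u' (Icc 0 1))
    (hw : ContinuousOn w (Icc 0 1))
    (hderiv : ∀ t' ∈ Icc (0 : Fin n → ℝ) 1, ∀ x ∈ Ioo (0 : ℝ) 1,
      HasDerivAt (fun y => u (Fin.cons y t')) (u' (Fin.cons x t')) x) :
    (a + 1) * ∫ t in Icc (0 : Fin (n + 1) → ℝ) 1, u t * (t 0 : ℂ) ^ a * w (Fin.tail t) =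
      (∫ t' in Icc (0 : Fin n → ℝ) 1,
        (u (Fin.cons 1 t') * 1 ^ (a + 1) * w t' - u (Fin.cons 0 t') * 0 ^ (a + 1) * w t')) -
      ∫ t in Icc (0 : Fin (n + 1) → ℝ) 1, u' t * (t 0 : ℂ) ^ (a + 1) * w (Fin.tail t) := by
  have ha1 : 0 < (a + 1).re := by simp only [Complex.add_re, Complex.one_re]; linarith
  have hfubini : ∀ v : (Fin (n + 1) → ℝ) → ℂ, ContinuousOn v (Icc 0 1) → ∀ b : ℂ, 0 < b.re →
      (∫ t in Icc (0 : Fin (n + 1) → ℝ) 1, v t * (t 0 : ℂ) ^ b * w (Fin.tail t) =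
        ∫ t' in Icc (0 : Fin n → ℝ) 1, ∫ x in Icc (0 : ℝ) 1,
          v (Fin.cons x t') * (x : ℂ) ^ b * w t') ∧
      IntegrableOn (fun t' => ∫ x in Icc (0 : ℝ) 1, v (Fin.cons x t') * (x : ℂ) ^ b * w t')
        (Icc 0 1) := by
    intro v hv b hb
    have hint : IntegrableOn (fun t => v t * (t 0 : ℂ) ^ b * w (Fin.tail t)) (Icc 0 1) :=
      ((hv.mul ((Complex.continuous_ofReal_cpow_const hb).comp
        (continuous_apply 0)).continuousOn).mul
        (hw.comp continuous_id.finTail.continuousOn fun t ht =>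
          ⟨fun i => ht.1 i.succ, fun i => ht.2 i.succ⟩)).integrableOn_compact isCompact_Icc
    -- `Fin.cons x t' 0` and `Fin.tail (Fin.cons x t')` reduce to `x` and `t'` definitionally.
    exact ⟨setIntegral_Icc_eq_integral_integral_finCons hint, hint.setIntegral_Icc_finCons⟩
  have hface : ∀ x ∈ Icc (0 : ℝ) 1, ContinuousOn (fun t' => u (Fin.cons x t')) (Icc 0 1) :=
    fun x hx => hu.comp (continuous_const.finCons continuous_id' (A := fun _ => ℝ)).continuousOn
      fun _ ht' => Fin.cons_mem_Icc.2 ⟨hx, ht'⟩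
  have hboundary : IntegrableOn (fun t' : Fin n → ℝ =>
      u (Fin.cons 1 t') * 1 ^ (a + 1) * w t' - u (Fin.cons 0 t') * 0 ^ (a + 1) * w t') (Icc 0 1) :=
    ((((hface 1 (by simp)).mul continuousOn_const).mul hw).sub
      (((hface 0 (by simp)).mul continuousOn_const).mul hw)).integrableOn_compact isCompact_Icc
  have hslice : ∀ t' ∈ Icc (0 : Fin n → ℝ) 1,
      (a + 1) * ∫ x in Icc (0 : ℝ) 1, u (Fin.cons x t') * (x : ℂ) ^ a * w t' =
        (u (Fin.cons 1 t') * 1 ^ (a + 1) * w t' - u (Fin.cons 0 t') * 0 ^ (a + 1) * w t') -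
        ∫ x in Icc (0 : ℝ) 1, u' (Fin.cons x t') * (x : ℂ) ^ (a + 1) * w t' := by
    intro t' ht'
    have hcons : ContinuousOn (fun x : ℝ => (Fin.cons x t' : Fin (n + 1) → ℝ)) (Icc 0 1) :=
      (continuous_id'.finCons continuous_const (X := ℝ) (A := fun _ => ℝ)).continuousOn
    rw [integral_mul_const, integral_mul_const, ← mul_assoc,
      integral_Icc_mul_ofReal_cpow_by_parts (u := fun x => u (Fin.cons x t'))
        (u' := fun x => u' (Fin.cons x t')) (by linarith) (hu.comp hcons (mapsTo_finCons_Icc ht'))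
        (hu'.comp hcons (mapsTo_finCons_Icc ht')) (hderiv t' ht')]
    ring
  obtain ⟨hsplit, -⟩ := hfubini u hu a ha
  obtain ⟨hsplit', hinner⟩ := hfubini u' hu' _ ha1
  rw [hsplit, hsplit', ← integral_const_mul, ← integral_sub hboundary hinner]
  exact setIntegral_congr_fun measurableSet_Icc hslice

/-- Integration by parts in the first variable `t₀` for
`∫_{[0,1]^{n+1}} P₁^c P₂^d ∏ tᵢ^{aᵢ}`: `(a₀+1)` times the integral equals the boundary
term minus the integral of
`(c P₁^{c-1} ∂₀P₁ P₂^d + d P₁^c ∂₀P₂ P₂^{d-1}) t₀^{a₀+1} ∏_{i≥1} tᵢ^{aᵢ}`. -/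
theorem integration_by_parts_box (n : ℕ) (P₁ P₂ : MvPolynomial (Fin (n + 1)) ℝ)
    (h1 : ∀ t ∈ Set.Icc (0 : Fin (n + 1) → ℝ) 1, 0 < eval t P₁)
    (h2 : ∀ t ∈ Set.Icc (0 : Fin (n + 1) → ℝ) 1, 0 < eval t P₂)
    (c d : ℂ) (a : Fin (n + 1) → ℂ) (ha : ∀ i, 0 < (a i).re) :
    (a 0 + 1) * ∫ t in Set.Icc (0 : Fin (n + 1) → ℝ) 1,
        ((eval t P₁ : ℝ) : ℂ) ^ c * ((eval t P₂ : ℝ) : ℂ) ^ d *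
          ∏ i, (t i : ℂ) ^ (a i) =
      (∫ t' in Set.Icc (0 : Fin n → ℝ) 1,
        (((eval (Fin.cons 1 t') P₁ : ℝ) : ℂ) ^ c * ((eval (Fin.cons 1 t') P₂ : ℝ) : ℂ) ^ d *
            ((1 : ℂ) ^ (a 0 + 1)) * ∏ i : Fin n, (t' i : ℂ) ^ (a i.succ) -
          ((eval (Fin.cons 0 t') P₁ : ℝ) : ℂ) ^ c * ((eval (Fin.cons 0 t') P₂ : ℝ) : ℂ) ^ d *
            ((0 : ℂ) ^ (a 0 + 1)) * ∏ i : Fin n, (t' i : ℂ) ^ (a i.succ))) -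
      ∫ t in Set.Icc (0 : Fin (n + 1) → ℝ) 1,
        (c * ((eval t P₁ : ℝ) : ℂ) ^ (c - 1) * ((eval t (pderiv 0 P₁) : ℝ) : ℂ) *
            ((eval t P₂ : ℝ) : ℂ) ^ d +
          d * ((eval t P₁ : ℝ) : ℂ) ^ c * ((eval t (pderiv 0 P₂) : ℝ) : ℂ) *
            ((eval t P₂ : ℝ) : ℂ) ^ (d - 1)) *
          (t 0 : ℂ) ^ (a 0 + 1) * ∏ i : Fin n, (t i.succ : ℂ) ^ (a i.succ) := by
  have hpow : ∀ P : MvPolynomial (Fin (n + 1)) ℝ, (∀ t ∈ Icc 0 1, 0 < eval t P) → ∀ e : ℂ,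
      ContinuousOn (fun t => ((eval t P : ℝ) : ℂ) ^ e) (Icc 0 1) :=
    fun P hP => P.continuous_eval.continuousOn.ofReal_cpow_const hP
  have hpderiv : ∀ P : MvPolynomial (Fin (n + 1)) ℝ,
      ContinuousOn (fun t => ((eval t (pderiv 0 P) : ℝ) : ℂ)) (Icc 0 1) :=
    fun P => (Complex.continuous_ofReal.comp (pderiv 0 P).continuous_eval).continuousOn
  simp_rw [Fin.prod_univ_succ, ← mul_assoc]
  refine integral_unitCube_mul_cpow_by_parts
    (u := fun t => ((eval t P₁ : ℝ) : ℂ) ^ c * ((eval t P₂ : ℝ) : ℂ) ^ d)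
    (w := fun t' => ∏ i : Fin n, (t' i : ℂ) ^ (a i.succ)) (ha 0)
    ((hpow P₁ h1 c).mul (hpow P₂ h2 d)) ?_ ?_ ?_
  · exact (((continuousOn_const.mul (hpow P₁ h1 _)).mul (hpderiv P₁)).mul (hpow P₂ h2 d)).add
      (((continuousOn_const.mul (hpow P₁ h1 c)).mul (hpderiv P₂)).mul (hpow P₂ h2 _))
  · exact continuousOn_finsetProd _ fun i _ =>
      ((Complex.continuous_ofReal_cpow_const (ha i.succ)).comp (continuous_apply i)).continuousOn
  · intro t' ht' x hx
    have hmem := mapsTo_finCons_Icc ht' (Ioo_subset_Icc_self hx)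
    exact (((hasDerivAt_eval_cons P₁ t' x).ofReal_cpow_const (h1 _ hmem) c).mul
      ((hasDerivAt_eval_cons P₂ t' x).ofReal_cpow_const (h2 _ hmem) d)).congr_deriv (by ring)
end

section
/- Let Γ be a finite connected graph with edge set E, |E| = n, and let SP_Γ ⊂ ℝⁿ be the convex hull of the incidence vectors 1_{E∖T} of complements of spanning trees T of Γ. If Γ is 2-connected with no self-loops, then SP_Γ has dimension n − 1. -/
open scoped Classical

variable {V E : Type} [Fintype V] [Fintype E] [DecidableEq V] [DecidableEq E]

/-- The spanning subgraph with all vertices and edge set `S`. -/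
def spanningSub (G : E → Sym2 V) (S : Finset E) : Subgraph G where
  verts := Finset.univ
  edges := S
  incl := fun _ _ v _ => Finset.mem_univ v

/-- `T` is (the edge set of) a spanning tree of `G`. -/
noncomputable def IsSpanningTree (G : E → Sym2 V) (T : Finset E) : Prop :=
  T.card + 1 = Fintype.card V ∧ comps G (spanningSub G T) = 1

/-- The graph `G` is connected. -/
noncomputable def GraphConnected (G : E → Sym2 V) : Prop :=
  comps G (spanningSub G Finset.univ) = 1

/-- Real incidence vector of a set of edges. -/
def ind (S : Finset E) : E → ℝ := fun e => if e ∈ S then 1 else 0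

/-- Integer incidence vector of a set of edges. -/
def indZ (S : Finset E) : E → ℤ := fun e => if e ∈ S then 1 else 0

/-- The subgraph obtained by deleting the vertex `v` and all edges incident to it. -/
noncomputable def deleteVert (G : E → Sym2 V) (v : V) : Subgraph G where
  verts := Finset.univ.erase v
  edges := Finset.univ.filter fun e => v ∉ G e
  incl := by
    intro e he w hw
    rw [Finset.mem_filter] at he
    refine Finset.mem_erase.mpr ⟨?_, Finset.mem_univ w⟩
    rintro rfl
    exact he.2 hw

/-!
All vertices of `SP_Γ` lie in the hyperplane `∑ xₑ = |E| - |V| + 1`, which bounds the dimension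
by `|E| - 1`. Conversely, let `f, f'` be edges at a common vertex `w`. Since `Γ - w` is connected
it has a spanning tree `P`, and `P + f`, `P + f'` are spanning trees of `Γ` (no loops), so
`e_f - e_{f'}` lies in the direction of `SP_Γ`. Connectivity of `Γ` chains these moves together,
so every `e_f - e_{f'}` does, and these span the whole hyperplane direction.
-/

theorem Sym2.exists_mem {α : Type*} (z : Sym2 α) : ∃ a, a ∈ z :=
  z.ind fun a b => ⟨a, Sym2.mem_mk_left a b⟩

theorem SimpleGraph.reachable_fromRel {α : Type*} (r : α → α → Prop) :
    (SimpleGraph.fromRel r).Reachable = Relation.EqvGen r := by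
  have : IsEquiv α (SimpleGraph.fromRel r).Reachable :=
    (SimpleGraph.reachable_is_equivalence _).isEquiv
  refine le_antisymm (fun a b hab => ?_) (Relation.EqvGen.eqvGen_le fun a b hab => ?_)
  · rw [SimpleGraph.reachable_iff_reflTransGen] at hab
    refine Relation.EqvGen.eqvGen_le (fun x y hxy => ?_) a b
      (Relation.EqvGen.reflTransGen_le_eqvGen _ a b hab)
    rcases hxy.2 with h | h
    exacts [.rel _ _ h, .symm _ _ (.rel _ _ h)]
  · by_cases h : a = b
    · exact h ▸ SimpleGraph.Reachable.refl _
    · exact SimpleGraph.Adj.reachable ⟨h, Or.inl hab⟩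

theorem sum_eq_zero_of_mem_vectorSpan {ι K : Type*} [Fintype ι] [Ring K]
    {s : Set (ι → K)} {c : K} (hs : ∀ p ∈ s, ∑ i, p i = c) {x : ι → K}
    (hx : x ∈ vectorSpan K s) : ∑ i, x i = 0 := by
  rw [vectorSpan_def] at hx
  induction hx using Submodule.span_induction with
  | mem x hx =>
    obtain ⟨p, hp, q, hq, rfl⟩ := hx
    simp [Finset.sum_sub_distrib, hs p hp, hs q hq]
  | zero => simp
  | add x y _ _ hx hy => simp [Finset.sum_add_distrib, hx, hy]
  | smul a x _ hx => simp [← Finset.mul_sum, hx]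

theorem Submodule.finrank_eq_card_sub_one_of_single_sub_single_mem {ι K : Type*} [Fintype ι]
    [DecidableEq ι] [Field K] (W : Submodule K (ι → K)) (hsum : ∀ x ∈ W, ∑ i, x i = 0)
    (hsingle : ∀ i j, Pi.single i 1 - Pi.single j 1 ∈ W) :
    Module.finrank K W = Fintype.card ι - 1 := by
  rcases isEmpty_or_nonempty ι with hι | ⟨⟨i₀⟩⟩
  · have := W.finrank_le
    simp_all
  let L : (ι → K) →ₗ[K] K := ∑ i, LinearMap.proj i
  have hL : ∀ x, L x = ∑ i, x i := fun x => by simp [L]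
  have hW : W = LinearMap.ker L := by
    refine le_antisymm (fun x hx => by simpa [hL] using hsum x hx) fun x hx => ?_
    have hx0 : ∑ i, x i = 0 := by simpa [hL] using hx
    have hx_eq : x = ∑ i, x i • (Pi.single i 1 - Pi.single i₀ 1) := by
      simp only [smul_sub, Finset.sum_sub_distrib, ← Finset.sum_smul, hx0, zero_smul, sub_zero]
      ext j
      simp [Pi.single_apply]
    rw [hx_eq]
    exact W.sum_mem fun i _ => W.smul_mem _ (hsingle i i₀)
  have hL0 : L ≠ 0 := fun h => by simpa [hL] using LinearMap.congr_fun h (Pi.single i₀ 1)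
  have := Module.Dual.finrank_ker_add_one_of_ne_zero hL0
  rw [Module.finrank_fintype_fun_eq_card] at this
  rw [hW]
  omega

namespace Subgraph

variable {G : E → Sym2 V}

-- Loops and parallel edges are forgotten; they play no role in connectivity.
def toSimpleGraph (H : Subgraph G) : SimpleGraph H.verts :=
  SimpleGraph.fromRel fun a b => ∃ e ∈ H.edges, G e = s(a.1, b.1)

theorem comps_eq_one_iff_connected (H : Subgraph G) :
    comps G H = 1 ↔ H.toSimpleGraph.Connected := by
  rw [comps, Nat.card_eq_one_iff_unique, SimpleGraph.connected_iff,
    SimpleGraph.preconnected_iff_reachable_eq_top, toSimpleGraph, SimpleGraph.reachable_fromRel,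
    Quot.subsingleton_iff]
  exact and_congr_right' ⟨fun ⟨q⟩ => Quot.inductionOn q fun a => ⟨a⟩, fun ⟨a⟩ => ⟨Quot.mk _ a⟩⟩

def homOfSubset {H H' : Subgraph G} (hv : H.verts ⊆ H'.verts) (he : H.edges ⊆ H'.edges) :
    H.toSimpleGraph →g H'.toSimpleGraph where
  toFun v := ⟨v.1, hv v.2⟩
  map_rel' := fun ⟨hne, h⟩ =>
    ⟨fun h' => hne (Subtype.ext (Subtype.mk.inj h')),
      h.imp (fun ⟨e, he', hG⟩ => ⟨e, he he', hG⟩) fun ⟨e, he', hG⟩ => ⟨e, he he', hG⟩⟩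

def restrictEdges (H : Subgraph G) (P : Finset E) (hP : P ⊆ H.edges) : Subgraph G where
  verts := H.verts
  edges := P
  incl e he := H.incl e (hP he)

theorem exists_spanningTree (H : Subgraph G) (h : comps G H = 1) :
    ∃ (P : Finset E) (hP : P ⊆ H.edges),
      P.card + 1 = H.verts.card ∧ (H.restrictEdges P hP).toSimpleGraph.Connected := by
  obtain ⟨T, hTH, hT⟩ := ((comps_eq_one_iff_connected H).1 h).exists_isTree_le
  have hlift : ∀ t ∈ T.edgeFinset, ∃ e ∈ H.edges, G e = t.map Subtype.val := by
    refine Sym2.ind fun a b hab => ?_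
    obtain ⟨-, ⟨e, he, hG⟩ | ⟨e, he, hG⟩⟩ := hTH (SimpleGraph.mem_edgeFinset.1 hab)
    exacts [⟨e, he, hG⟩, ⟨e, he, hG.trans Sym2.eq_swap⟩]
  choose lift hlift_mem hlift_eq using hlift
  let P := T.edgeFinset.attach.image fun t => lift t.1 t.2
  have hP : P ⊆ H.edges := by
    simp only [P, Finset.image_subset_iff]
    exact fun t _ => hlift_mem _ _
  refine ⟨P, hP, ?_, ?_⟩
  · have hinj : Function.Injective fun t : T.edgeFinset => lift t.1 t.2 := fun t t' htt' =>
      Subtype.ext <| Sym2.map.injective Subtype.val_injective <| by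
        rw [← hlift_eq _ t.2, ← hlift_eq _ t'.2]
        exact congrArg G htt'
    rw [Finset.card_image_of_injective _ hinj, Finset.card_attach, hT.card_edgeFinset,
      Fintype.card_coe]
  · refine hT.connected.map ⟨id, fun {a b} hab => ⟨hab.ne, Or.inl ?_⟩⟩ Function.surjective_id
    have hmem : s(a, b) ∈ T.edgeFinset := SimpleGraph.mem_edgeFinset.2 hab
    exact ⟨_, Finset.mem_image_of_mem _ (Finset.mem_attach _ ⟨_, hmem⟩), hlift_eq _ hmem⟩

end Subgraph

section

variable {G : E → Sym2 V}

theorem GraphConnected.apply_eq_of_incident {β : Type*} (hconn : GraphConnected G) (φ : E → β)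
    (hφ : ∀ v e f, v ∈ G e → v ∈ G f → φ e = φ f) (e f : E) : φ e = φ f := by
  obtain ⟨a, ha⟩ := Sym2.exists_mem (G e)
  obtain ⟨b, hb⟩ := Sym2.exists_mem (G f)
  let Γ := (spanningSub G Finset.univ).toSimpleGraph
  suffices ∀ x, Relation.ReflTransGen Γ.Adj x ⟨b, Finset.mem_univ b⟩ →
      ∀ e, x.1 ∈ G e → φ e = φ f from
    this ⟨a, Finset.mem_univ a⟩ ((SimpleGraph.reachable_iff_reflTransGen _ _).1
      (((Subgraph.comps_eq_one_iff_connected _).1 hconn).preconnected _ _)) e ha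
  intro x hx
  induction hx using Relation.ReflTransGen.head_induction_on with
  | refl => exact fun e he => hφ b e f he hb
  | @head x y hxy _ ih =>
    obtain ⟨g, hxg, hyg⟩ : ∃ g, x.1 ∈ G g ∧ y.1 ∈ G g := by
      obtain ⟨-, ⟨g, -, hg⟩ | ⟨g, -, hg⟩⟩ := hxy <;> exact ⟨g, by simp [hg]⟩
    exact fun e he => (hφ x e g he hxg).trans (ih g hyg)

theorem exists_forall_isSpanningTree_insert (hloop : ∀ e, ¬ (G e).IsDiag) {w : V}
    (hw : comps G (deleteVert G w) = 1) :
    ∃ P : Finset E, ∀ g, w ∈ G g → g ∉ P ∧ IsSpanningTree G (insert g P) := by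
  -- `P` is a spanning tree of `G - w`; an edge at `w` attaches the isolated vertex `w` to it.
  obtain ⟨P, hPD, hcard, hPconn⟩ := (deleteVert G w).exists_spanningTree hw
  refine ⟨P, fun g hwg => ?_⟩
  have hgP : g ∉ P := fun hg => (Finset.mem_filter.1 (hPD hg)).2 hwg
  obtain ⟨u, hu⟩ := Sym2.mem_iff_exists.1 hwg
  have huw : u ≠ w := by
    rintro rfl
    exact hloop g (hu ▸ Sym2.mk_isDiag_iff.2 rfl)
  refine ⟨hgP, ?_, ?_⟩
  · rw [Finset.card_insert_of_notMem hgP, hcard]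
    exact Finset.card_erase_add_one (Finset.mem_univ w)
  rw [Subgraph.comps_eq_one_iff_connected, SimpleGraph.connected_iff_exists_forall_reachable]
  refine ⟨⟨u, Finset.mem_univ u⟩, fun x => ?_⟩
  by_cases hx : x.1 = w
  · refine SimpleGraph.Adj.reachable ⟨fun h => huw (hx ▸ congrArg Subtype.val h), Or.inr ?_⟩
    exact ⟨g, Finset.mem_insert_self g P, hx ▸ hu⟩
  · have hu' : u ∈ (deleteVert G w).verts := Finset.mem_erase.2 ⟨huw, Finset.mem_univ u⟩
    have hx' : x.1 ∈ (deleteVert G w).verts := Finset.mem_erase.2 ⟨hx, Finset.mem_univ _⟩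
    exact (hPconn.preconnected ⟨u, hu'⟩ ⟨x.1, hx'⟩).map
      (Subgraph.homOfSubset (Finset.subset_univ _) (Finset.subset_insert g P))

theorem sum_ind (S : Finset E) : ∑ e, ind S e = S.card := by
  simp [ind]

theorem IsSpanningTree.sum_ind_compl {T : Finset E} (hT : IsSpanningTree G T) :
    ∑ e, ind Tᶜ e = (Fintype.card E : ℝ) + 1 - Fintype.card V := by
  rw [sum_ind, Finset.card_compl, Nat.cast_sub (Finset.card_le_univ T), ← hT.1]
  push_cast
  ring

theorem ind_compl_insert_sub_ind_compl_insert {P : Finset E} {f f' : E} (hf : f ∉ P)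
    (hf' : f' ∉ P) :
    ind (insert f P)ᶜ - ind (insert f' P)ᶜ = Pi.single f' 1 - Pi.single f 1 := by
  ext g
  by_cases hgf : g = f <;> by_cases hgf' : g = f' <;> simp_all [ind]

end

/-- For a 2-connected graph without self-loops, the spanning tree polytope `SP_Γ`
(convex hull of incidence vectors of complements of spanning trees) has dimension
`|E| - 1`. -/
theorem spanningTree_polytope_dim (G : E → Sym2 V)
    (hconn : GraphConnected G)
    (hloop : ∀ e, ¬ (G e).IsDiag)
    (h2conn : ∀ v : V, comps G (deleteVert G v) = 1) :
    Module.finrank ℝ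
        (vectorSpan ℝ (convexHull ℝ {x : E → ℝ | ∃ T, IsSpanningTree G T ∧ x = ind Tᶜ})) =
      Fintype.card E - 1 := by
  set s : Set (E → ℝ) := {x | ∃ T, IsSpanningTree G T ∧ x = ind Tᶜ}
  rw [← direction_affineSpan, affineSpan_convexHull, direction_affineSpan]
  refine (vectorSpan ℝ s).finrank_eq_card_sub_one_of_single_sub_single_mem
    (fun _ => sum_eq_zero_of_mem_vectorSpan (s := s) fun _ ⟨_, hT, hp⟩ => hp ▸ hT.sum_ind_compl)
    fun e f => (Submodule.Quotient.eq _).1 ?_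
  refine hconn.apply_eq_of_incident (fun e => (vectorSpan ℝ s).mkQ (Pi.single e 1))
    (fun v e f hve hvf => ?_) e f
  obtain ⟨P, hP⟩ := exists_forall_isSpanningTree_insert hloop (h2conn v)
  refine (Submodule.Quotient.eq _).2 ?_
  rw [← ind_compl_insert_sub_ind_compl_insert (hP f hvf).1 (hP e hve).1]
  exact vsub_mem_vectorSpan ℝ ⟨_, (hP f hvf).2, rfl⟩ ⟨_, (hP e hve).2, rfl⟩
end

section
/- Let Γ be a finite connected graph with n edges and let x ∈ P'_Γ = {x ∈ ℝⁿ : ⟨1_γ, x⟩ ≥ ℓ_γ for all subgraphs γ ⊆ Γ, ⟨1_Γ, x⟩ ≤ ℓ_Γ + 1}. Then the family F = {γ ⊆ Γ : ⟨1_γ, x⟩ = ℓ_γ} of subgraphs whose inequality is tight at x is closed under union and intersection of subgraphs. -/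
open scoped Classical

variable {V E : Type} [Fintype V] [Fintype E] [DecidableEq V] [DecidableEq E]

section Aux

variable {G : E → Sym2 V}

/-- Auxiliary relation: `a` and `b` are joined by an edge of `S`. -/
def erel (G : E → Sym2 V) (S : Finset E) (a b : V) : Prop := ∃ e ∈ S, G e = s(a, b)

/-- Number of connected components of the spanning subgraph with edge set `S`,
as a quotient over all of `V`. -/
noncomputable def cC (G : E → Sym2 V) (S : Finset E) : ℕ := Nat.card (Quot (erel G S))

lemma erel_mono {S T : Finset E} (hST : S ⊆ T) {a b : V} (h : erel G S a b) :
    erel G T a b := by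
  obtain ⟨e, he, hG⟩ := h
  exact ⟨e, hST he, hG⟩


lemma egs {α : Type*} {r : α → α → Prop} {a b : α}
    (h : Relation.EqvGen r a b) : Relation.EqvGen r b a :=
  Relation.EqvGen.symm a b h

lemma egt {α : Type*} {r : α → α → Prop} {a b c : α}
    (h : Relation.EqvGen r a b) (h' : Relation.EqvGen r b c) : Relation.EqvGen r a c :=
  Relation.EqvGen.trans a b c h h'

lemma comps_spanning (S : Finset E) : comps G (spanningSub G S) = cC G S := by
  unfold comps cC spanningSub erel
  exact Nat.card_congr
    (Quot.congr (Equiv.subtypeUnivEquiv (fun v => Finset.mem_univ v)) (fun a b => Iff.rfl))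

lemma comps_spanning_edges (H : Subgraph G) :
    cC G H.edges + H.verts.card = comps G H + Fintype.card V := by
  classical
  have equiv : Quot (erel G H.edges) ≃
      (Quot fun a b : {v : V // v ∈ H.verts} => ∃ e ∈ H.edges, G e = s(a.1, b.1)) ⊕
      {v : V // v ∉ H.verts} := by
    refine ⟨Quot.lift (fun v => if h : v ∈ H.verts then Sum.inl (Quot.mk _ ⟨v, h⟩)
        else Sum.inr ⟨v, h⟩) ?_,
      Sum.elim (Quot.lift (fun a => Quot.mk _ a.1) ?_) (fun v => Quot.mk _ v.1), ?_, ?_⟩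
    · rintro a b ⟨e, he, hG⟩
      have ha : a ∈ H.verts := H.incl e he a (hG ▸ Sym2.mem_mk_left a b)
      have hb : b ∈ H.verts := H.incl e he b (hG ▸ Sym2.mem_mk_right a b)
      rw [dif_pos ha, dif_pos hb]
      exact congrArg Sum.inl (Quot.sound ⟨e, he, hG⟩)
    · rintro a b ⟨e, he, hG⟩
      exact Quot.sound ⟨e, he, hG⟩
    · refine Quot.ind (fun v => ?_)
      dsimp only
      by_cases h : v ∈ H.verts
      · rw [dif_pos h]
        rfl
      · rw [dif_neg h]
        rfl
    · rintro (x | v)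
      · induction x using Quot.ind with
        | _ a =>
          show (fun v => if h : v ∈ H.verts then Sum.inl (Quot.mk _ (⟨v, h⟩ : {v : V // v ∈ H.verts}))
            else Sum.inr (⟨v, h⟩ : {v : V // v ∉ H.verts})) a.1 = _
          dsimp only
          rw [dif_pos a.2]
      · show (fun w => if h : w ∈ H.verts then Sum.inl (Quot.mk _ (⟨w, h⟩ : {v : V // v ∈ H.verts}))
          else Sum.inr (⟨w, h⟩ : {v : V // v ∉ H.verts})) v.1 = _
        dsimp only
        rw [dif_neg v.2]
  have h1 : cC G H.edges = comps G H + Nat.card {v : V // v ∉ H.verts} := by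
    rw [cC, comps, Nat.card_congr equiv, Nat.card_sum]
  have h2 : Nat.card {v : V // v ∉ H.verts} = Fintype.card V - H.verts.card := by
    simp [Nat.card_eq_fintype_card, Fintype.card_subtype_compl]
  have h3 : H.verts.card ≤ Fintype.card V := Finset.card_le_univ _
  omega

lemma cycleRank_eq (H : Subgraph G) :
    cycleRank G H = (H.edges.card : ℤ) - (Fintype.card V : ℤ) + (cC G H.edges : ℤ) := by
  have h := comps_spanning_edges H
  unfold cycleRank
  omega

lemma conn_insert_iff {S : Finset E} {f : E} {u v : V} (hf : G f = s(u, v)) (a b : V) :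
    Relation.EqvGen (erel G (insert f S)) a b ↔
      Relation.EqvGen (erel G S) a b ∨
      (Relation.EqvGen (erel G S) a u ∧ Relation.EqvGen (erel G S) v b) ∨
      (Relation.EqvGen (erel G S) a v ∧ Relation.EqvGen (erel G S) u b) := by
  constructor
  · intro h
    induction h with
    | rel p q hpq =>
      obtain ⟨e, he, hG⟩ := hpq
      rcases Finset.mem_insert.mp he with rfl | heS
      · rw [hf] at hG
        rcases Sym2.eq_iff.mp hG with ⟨rfl, rfl⟩ | ⟨rfl, rfl⟩
        · exact Or.inr (Or.inl ⟨Relation.EqvGen.refl _, Relation.EqvGen.refl _⟩)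
        · exact Or.inr (Or.inr ⟨Relation.EqvGen.refl _, Relation.EqvGen.refl _⟩)
      · exact Or.inl (Relation.EqvGen.rel _ _ ⟨e, heS, hG⟩)
    | refl p => exact Or.inl (Relation.EqvGen.refl _)
    | symm p q _ ih =>
      rcases ih with h | ⟨ha, hb⟩ | ⟨ha, hb⟩
      · exact Or.inl (egs h)
      · exact Or.inr (Or.inr ⟨egs hb, egs ha⟩)
      · exact Or.inr (Or.inl ⟨egs hb, egs ha⟩)
    | trans p q r _ _ ih1 ih2 =>
      rcases ih1 with h | ⟨ha, hb⟩ | ⟨ha, hb⟩ <;>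
        rcases ih2 with h' | ⟨ha', hb'⟩ | ⟨ha', hb'⟩
      · exact Or.inl (egt h h')
      · exact Or.inr (Or.inl ⟨egt h ha', hb'⟩)
      · exact Or.inr (Or.inr ⟨egt h ha', hb'⟩)
      · exact Or.inr (Or.inl ⟨ha, egt hb h'⟩)
      · exact Or.inr (Or.inl ⟨ha, hb'⟩)
      · exact Or.inl (egt ha hb')
      · exact Or.inr (Or.inr ⟨ha, egt hb h'⟩)
      · exact Or.inl (egt ha hb')
      · exact Or.inr (Or.inr ⟨ha, hb'⟩)
  · have hedge : Relation.EqvGen (erel G (insert f S)) u v :=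
      Relation.EqvGen.rel _ _ ⟨f, Finset.mem_insert_self f S, hf⟩
    have hmono : ∀ {x y : V}, Relation.EqvGen (erel G S) x y →
        Relation.EqvGen (erel G (insert f S)) x y :=
      fun h => h.mono (fun a b hab => erel_mono (Finset.subset_insert f S) hab)
    rintro (h | ⟨ha, hb⟩ | ⟨ha, hb⟩)
    · exact hmono h
    · exact egt (hmono ha) (egt hedge (hmono hb))
    · exact egt (hmono ha) (egt (egs hedge) (hmono hb))

lemma cC_le {S T : Finset E} (hST : S ⊆ T) : cC G T ≤ cC G S := by
  have : Finite (Quot (erel G S)) := Quot.finite _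
  exact Nat.card_le_card_of_surjective
    (Quot.map id (fun a b hab => erel_mono hST hab))
    (Quot.ind (fun b => ⟨Quot.mk _ b, rfl⟩))

lemma cC_insert_eq {S : Finset E} {f : E} {u v : V} (hf : G f = s(u, v))
    (hc : Relation.EqvGen (erel G S) u v) : cC G (insert f S) = cC G S := by
  refine Nat.card_eq_of_bijective (Quot.lift (Quot.mk _) ?_) ⟨?_, ?_⟩
  · intro a b hab
    apply Quot.eqvGen_sound
    rcases (conn_insert_iff hf a b).mp (Relation.EqvGen.rel _ _ hab) with h | ⟨h1, h2⟩ | ⟨h1, h2⟩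
    · exact h
    · exact egt h1 (egt hc h2)
    · exact egt h1 (egt (egs hc) h2)
  · refine Quot.ind (fun a => Quot.ind (fun b h => ?_))
    exact Quot.eqvGen_sound
      ((Quot.eqvGen_exact h).mono (fun a b hab => erel_mono (Finset.subset_insert f S) hab))
  · exact Quot.ind (fun b => ⟨Quot.mk _ b, rfl⟩)

lemma cC_insert_merge {S : Finset E} {f : E} {u v : V} (hf : G f = s(u, v))
    (hc : ¬ Relation.EqvGen (erel G S) u v) :
    cC G S = cC G (insert f S) + 1 := by
  classical
  have hmono : ∀ (a b : V), erel G S a b → erel G (insert f S) a b :=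
    fun a b hab => erel_mono (Finset.subset_insert f S) hab
  set π : Quot (erel G S) → Quot (erel G (insert f S)) := Quot.map id hmono with hπ
  have hπmk : ∀ a : V, π (Quot.mk _ a) = Quot.mk _ a := fun a => rfl
  have hbij : Function.Bijective
      (fun x : {x : Quot (erel G S) // x ≠ Quot.mk (erel G S) v} => π x.1) := by
    constructor
    · rintro ⟨x, hx⟩ ⟨y, hy⟩ hxy
      obtain ⟨a, rfl⟩ := Quot.exists_rep x
      obtain ⟨b, rfl⟩ := Quot.exists_rep y
      simp only [hπmk] at hxy
      rcases (conn_insert_iff hf a b).mp (Quot.eqvGen_exact hxy) with h | ⟨h1, h2⟩ | ⟨h1, h2⟩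
      · exact Subtype.ext (Quot.eqvGen_sound h)
      · exact absurd (Quot.eqvGen_sound (egs h2)) hy
      · exact absurd (Quot.eqvGen_sound h1) hx
    · intro y
      obtain ⟨b, rfl⟩ := Quot.exists_rep y
      by_cases hbv : Quot.mk (erel G S) b = Quot.mk (erel G S) v
      · refine ⟨⟨Quot.mk _ u, fun hc' => hc (Quot.eqvGen_exact hc')⟩, ?_⟩
        show π (Quot.mk _ u) = Quot.mk _ b
        rw [hπmk]
        apply Quot.eqvGen_sound
        have h1 : Relation.EqvGen (erel G (insert f S)) u v :=
          Relation.EqvGen.rel _ _ ⟨f, Finset.mem_insert_self f S, hf⟩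
        have h2 : Relation.EqvGen (erel G S) v b := egs (Quot.eqvGen_exact hbv)
        exact egt h1 (h2.mono hmono)
      · exact ⟨⟨Quot.mk _ b, hbv⟩, rfl⟩
  have h1 : Nat.card {x : Quot (erel G S) // x ≠ Quot.mk (erel G S) v} = cC G (insert f S) :=
    Nat.card_eq_of_bijective _ hbij
  have h2 : Nat.card {x : Quot (erel G S) // x ≠ Quot.mk (erel G S) v} + 1
      = Nat.card (Quot (erel G S)) := by
    have : Finite (Quot (erel G S)) := Quot.finite _
    letI := Fintype.ofFinite (Quot (erel G S))
    rw [Nat.card_eq_fintype_card, Nat.card_eq_fintype_card]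
    have h3 : Fintype.card {x : Quot (erel G S) // x ≠ Quot.mk (erel G S) v}
        = Fintype.card (Quot (erel G S))
          - Fintype.card {x : Quot (erel G S) // x = Quot.mk (erel G S) v} :=
      Fintype.card_subtype_compl _
    rw [Fintype.card_subtype_eq] at h3
    have h4 : 0 < Fintype.card (Quot (erel G S)) := Fintype.card_pos_iff.mpr ⟨Quot.mk _ v⟩
    omega
  simp only [cC] at h1 ⊢
  omega

lemma cC_diminish {A B : Finset E} (hAB : A ⊆ B) (f : E) :
    (cC G B : ℤ) - cC G (insert f B) ≤ (cC G A : ℤ) - cC G (insert f A) := by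
  obtain ⟨u, v, hf⟩ : ∃ u v, G f = s(u, v) := Sym2.ind (fun u v => ⟨u, v, rfl⟩) (G f)
  by_cases hc : Relation.EqvGen (erel G B) u v
  · rw [cC_insert_eq hf hc]
    have h := cC_le (G := G) (Finset.subset_insert f A)
    omega
  · have hc' : ¬ Relation.EqvGen (erel G A) u v := fun h =>
      hc (h.mono (fun a b hab => erel_mono hAB hab))
    rw [cC_insert_merge hf hc, cC_insert_merge hf hc']
    omega

lemma cC_exchange (A B : Finset E) (hAB : A ⊆ B) (X : Finset E) :
    (cC G (A ∪ X) : ℤ) + cC G B ≤ (cC G A : ℤ) + cC G (B ∪ X) := by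
  classical
  induction X using Finset.induction_on with
  | empty => simp
  | @insert f X hfX ih =>
    rw [Finset.union_insert, Finset.union_insert]
    have hd := cC_diminish (G := G) (Finset.union_subset_union hAB (Finset.Subset.refl X)) f
    omega

lemma cC_submod (S T : Finset E) :
    (cC G S : ℤ) + cC G T ≤ (cC G (S ∩ T) : ℤ) + cC G (S ∪ T) := by
  have h := cC_exchange (G := G) (S ∩ T) T Finset.inter_subset_right S
  rw [Finset.union_eq_right.mpr Finset.inter_subset_left, Finset.union_comm T S] at h
  exact h

lemma cycleRank_submod (γ₁ γ₂ : Subgraph G) :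
    cycleRank G γ₁ + cycleRank G γ₂ ≤
      cycleRank G (Subgraph.inter G γ₁ γ₂) + cycleRank G (Subgraph.union G γ₁ γ₂) := by
  rw [cycleRank_eq γ₁, cycleRank_eq γ₂, cycleRank_eq (Subgraph.inter G γ₁ γ₂),
    cycleRank_eq (Subgraph.union G γ₁ γ₂)]
  have hsub := cC_submod (G := G) γ₁.edges γ₂.edges
  have hcard := Finset.card_union_add_card_inter γ₁.edges γ₂.edges
  have he1 : (Subgraph.inter G γ₁ γ₂).edges = γ₁.edges ∩ γ₂.edges := rfl
  have he2 : (Subgraph.union G γ₁ γ₂).edges = γ₁.edges ∪ γ₂.edges := rfl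
  rw [he1, he2]
  omega

end Aux

/-- For a point `x` of the polytope `P'_Γ`, the family of subgraphs whose defining
inequality `⟨1_γ, x⟩ ≥ ℓ_γ` is tight at `x` is closed under union and intersection. -/
theorem tight_family_closed (G : E → Sym2 V) (hconn : GraphConnected G) (x : E → ℝ)
    (hx : (∀ γ : Subgraph G, (cycleRank G γ : ℝ) ≤ ∑ e ∈ γ.edges, x e) ∧
      ∑ e, x e ≤ (cycleRank G (spanningSub G Finset.univ) : ℝ) + 1)
    (γ₁ γ₂ : Subgraph G)
    (h1 : ∑ e ∈ γ₁.edges, x e = (cycleRank G γ₁ : ℝ))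
    (h2 : ∑ e ∈ γ₂.edges, x e = (cycleRank G γ₂ : ℝ)) :
    (∑ e ∈ (Subgraph.union G γ₁ γ₂).edges, x e =
        (cycleRank G (Subgraph.union G γ₁ γ₂) : ℝ)) ∧
    (∑ e ∈ (Subgraph.inter G γ₁ γ₂).edges, x e =
        (cycleRank G (Subgraph.inter G γ₁ γ₂) : ℝ)) := by
  obtain ⟨hineq, -⟩ := hx
  have hU := hineq (Subgraph.union G γ₁ γ₂)
  have hI := hineq (Subgraph.inter G γ₁ γ₂)
  have hsum : (∑ e ∈ (Subgraph.union G γ₁ γ₂).edges, x e)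
      + ∑ e ∈ (Subgraph.inter G γ₁ γ₂).edges, x e
      = (∑ e ∈ γ₁.edges, x e) + ∑ e ∈ γ₂.edges, x e :=
    Finset.sum_union_inter
  have hsub : (cycleRank G γ₁ : ℝ) + cycleRank G γ₂ ≤
      (cycleRank G (Subgraph.inter G γ₁ γ₂) : ℝ) + cycleRank G (Subgraph.union G γ₁ γ₂) := by
    exact_mod_cast cycleRank_submod γ₁ γ₂
  constructor <;> linarith
end

section
/- Every integer point of the polytope P'_Γ = {x ∈ ℝⁿ : ⟨1_γ, x⟩ ≥ ℓ_γ for all subgraphs γ, ⟨1_Γ, x⟩ ≤ ℓ_Γ + 1} is either the incidence vector of the complement of a spanning tree of Γ, or such an incidence vector plus a standard basis vector e_i. -/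
open scoped Classical

variable {V E : Type} [Fintype V] [Fintype E] [DecidableEq V] [DecidableEq E]

/-! Write `ℓ(A) = |A| - |V| + c(A)` for the spanning subgraph with edge set `A`, where `c`
counts components; adding an edge lowers `c` by at most one, so `ℓ ≥ 0`. The constraints
for single edges give `x ≥ 0`, and the constraint for the zero set `S` of `x` then forces
`ℓ(S) = 0`: `S` is a forest with `c(S) = |V| - |S|`. Since `x ≥ 1` off `S`, comparing
`∑ x ≥ |E ∖ S|` with the bound `ℓ(Γ) + 1` leaves two cases. Either `S` is a spanning tree
and `x` exceeds `1_{E ∖ S}` by at most one unit, or `S` has two components and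
`x = 1_{E ∖ S}`; then an edge `i` joining them makes `S ∪ {i}` a spanning tree, and
`x = 1_{E ∖ (S ∪ {i})} + e_i`. -/

section QuotCard

variable {α : Type*} {r s : α → α → Prop}

lemma Quot.mapRight_surjective (hrs : r ≤ s) : (Quot.mapRight hrs).Surjective :=
  Quot.map_surjective _ Function.surjective_id

lemma natCard_quot_le_of_le [Finite α] (hrs : r ≤ s) : Nat.card (Quot s) ≤ Nat.card (Quot r) :=
  Nat.card_le_card_of_surjective _ (Quot.mapRight_surjective hrs)

lemma natCard_quot_lt_of_not_eqvGen [Finite α] (hrs : r ≤ s) {a b : α} (hab : s a b)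
    (hr : ¬ Relation.EqvGen r a b) : Nat.card (Quot s) < Nat.card (Quot r) := by
  refine (natCard_quot_le_of_le hrs).lt_of_ne fun hcard => hr (Quot.eqvGen_exact ?_)
  have hbij := (Nat.bijective_iff_surjective_and_card _).mpr
    ⟨Quot.mapRight_surjective hrs, hcard.symm⟩
  exact hbij.injective (Quot.sound hab)

lemma exists_not_eqvGen_of_natCard_quot_lt [Finite α] (hrs : r ≤ s)
    (hlt : Nat.card (Quot s) < Nat.card (Quot r)) : ∃ a b, s a b ∧ ¬ Relation.EqvGen r a b := by
  by_contra! hs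
  refine hlt.not_ge (Nat.card_le_card_of_injective (Quot.mapRight hrs) ?_)
  rintro ⟨a⟩ ⟨b⟩ hab
  exact Quot.eqvGen_sound (Relation.EqvGen.eqvGen_le hs a b (Quot.eqvGen_exact hab))

lemma natCard_quot_of_forall_not [Finite α] (hr : ∀ a b, ¬ r a b) :
    Nat.card (Quot r) = Nat.card α := by
  refine (Nat.card_eq_of_bijective (Quot.mk r) ⟨fun a b hab => ?_, Quot.mk_surjective⟩).symm
  exact Relation.EqvGen.eqvGen_le (fun a b h => absurd h (hr a b)) a b (Quot.eqvGen_exact hab)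

lemma natCard_quot_le_add_one [Finite α] (hrs : r ≤ s) {v w : α}
    (hs : ∀ a b, s a b → r a b ∨ s(a, b) = s(v, w)) :
    Nat.card (Quot r) ≤ Nat.card (Quot s) + 1 := by
  classical
  let ends : Set (Quot r) := {Quot.mk r v, Quot.mk r w}
  have key : ∀ a b, Relation.EqvGen s a b →
      Quot.mk r a = Quot.mk r b ∨ (Quot.mk r a ∈ ends ∧ Quot.mk r b ∈ ends) := by
    intro a b h
    induction h with
    | rel a b h =>
      rcases hs a b h with h | h
      · exact Or.inl (Quot.sound h)
      · rcases Sym2.eq_iff.mp h with ⟨rfl, rfl⟩ | ⟨rfl, rfl⟩ <;> simp [ends]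
    | refl => exact Or.inl rfl
    | symm _ _ _ ih => exact ih.imp Eq.symm And.symm
    | trans _ _ _ _ _ ih₁ ih₂ =>
      rcases ih₁ with h₁ | ⟨h₁, h₁'⟩ <;> rcases ih₂ with h₂ | ⟨h₂, h₂'⟩
      · exact Or.inl (h₁.trans h₂)
      · exact Or.inr ⟨h₁ ▸ h₂, h₂'⟩
      · exact Or.inr ⟨h₁, h₂ ▸ h₁'⟩
      · exact Or.inr ⟨h₁, h₂'⟩
  -- Away from the class of `w`, the map `Quot r → Quot s` is injective.
  let f : Quot r → Option (Quot s) := fun q =>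
    if q = Quot.mk r w then none else some (Quot.mapRight hrs q)
  have hf : f.Injective := by
    rintro ⟨a⟩ ⟨b⟩ hab
    simp only [f] at hab
    split_ifs at hab with ha hb hb
    · rw [ha, hb]
    rcases key a b (Quot.eqvGen_exact (Option.some_injective _ hab)) with h | ⟨ha', hb'⟩
    · exact h
    · simp only [ends, Set.mem_insert_iff, Set.mem_singleton_iff] at ha' hb'
      rw [ha'.resolve_right ha, hb'.resolve_right hb]
  calc Nat.card (Quot r) ≤ Nat.card (Option (Quot s)) := Nat.card_le_card_of_injective f hf
    _ = Nat.card (Quot s) + 1 := Finite.card_option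

end QuotCard

section Multigraph

variable {W F : Type*} (G : F → Sym2 W)

def edgeRel (A : Finset F) (a b : W) : Prop := ∃ e ∈ A, G e = s(a, b)

noncomputable def numComps (A : Finset F) : ℕ := Nat.card (Quot (edgeRel G A))

variable {G}

lemma edgeRel_mono {A B : Finset F} (h : A ⊆ B) : edgeRel G A ≤ edgeRel G B :=
  fun _ _ ⟨e, he, hG⟩ => ⟨e, h he, hG⟩

lemma numComps_anti [Finite W] {A B : Finset F} (h : A ⊆ B) : numComps G B ≤ numComps G A :=
  natCard_quot_le_of_le (edgeRel_mono h)

lemma numComps_empty [Finite W] : numComps G ∅ = Nat.card W := by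
  refine natCard_quot_of_forall_not ?_
  rintro a b ⟨e, he, -⟩
  exact Finset.notMem_empty e he

lemma numComps_le_numComps_insert_add_one [Finite W] [DecidableEq F] (A : Finset F) (e : F) :
    numComps G A ≤ numComps G (insert e A) + 1 := by
  induction hG : G e using Sym2.ind with | _ v w => ?_
  refine natCard_quot_le_add_one (v := v) (w := w) (edgeRel_mono (Finset.subset_insert e A)) ?_
  rintro a b ⟨f, hf, hfab⟩
  rcases Finset.mem_insert.mp hf with rfl | hf
  · exact Or.inr (hfab.symm.trans hG)
  · exact Or.inl ⟨f, hf, hfab⟩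

lemma natCard_le_numComps_add_card [Finite W] [DecidableEq F] (A : Finset F) :
    Nat.card W ≤ numComps G A + A.card := by
  induction A using Finset.induction with
  | empty => simp [numComps_empty]
  | insert e A he ih =>
    have := numComps_le_numComps_insert_add_one (G := G) A e
    rw [Finset.card_insert_of_notMem he]
    omega

lemma exists_numComps_insert_lt [Finite W] [DecidableEq F] [Fintype F] {A : Finset F}
    (h : numComps G Finset.univ < numComps G A) :
    ∃ e, numComps G (insert e A) < numComps G A := by
  obtain ⟨a, b, ⟨e, -, he⟩, hab⟩ :=
    exists_not_eqvGen_of_natCard_quot_lt (edgeRel_mono (Finset.subset_univ A)) h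
  exact ⟨e, natCard_quot_lt_of_not_eqvGen (edgeRel_mono (Finset.subset_insert e A))
    ⟨e, Finset.mem_insert_self e A, he⟩ hab⟩

end Multigraph

lemma comps_spanningSub (G : E → Sym2 V) (A : Finset E) :
    comps G (spanningSub G A) = numComps G A :=
  Nat.card_congr (Quot.congr (Equiv.subtypeUnivEquiv Finset.mem_univ) fun _ _ => Iff.rfl)

lemma cycleRank_spanningSub (G : E → Sym2 V) (A : Finset E) :
    cycleRank G (spanningSub G A) = A.card - Nat.card V + numComps G A := by
  rw [cycleRank, comps_spanningSub, spanningSub, Finset.card_univ, Nat.card_eq_fintype_card]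

lemma isSpanningTree_iff {G : E → Sym2 V} {T : Finset E} :
    IsSpanningTree G T ↔ T.card + 1 = Nat.card V ∧ numComps G T = 1 := by
  rw [IsSpanningTree, comps_spanningSub, Nat.card_eq_fintype_card]

lemma eq_zero_or_exists_eq_single_of_sum_le_one {ι : Type*} [Fintype ι] [DecidableEq ι]
    {f : ι → ℤ} (hf : 0 ≤ f) (hsum : ∑ i, f i ≤ 1) : f = 0 ∨ ∃ i, f = Pi.single i 1 := by
  obtain h | ⟨i, hi⟩ := eq_or_ne f 0 |>.imp_right Function.ne_iff.mp
  · exact Or.inl h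
  have hf' (j : ι) : 0 ≤ f j := hf j
  have hsplit := Finset.add_sum_erase Finset.univ f (Finset.mem_univ i)
  have := Finset.sum_nonneg fun j (_ : j ∈ Finset.univ.erase i) => hf' j
  have hfi : f i = 1 := by
    have : f i ≠ 0 := hi
    have := hf' i
    omega
  have hrest : ∑ j ∈ Finset.univ.erase i, f j = 0 := by omega
  refine Or.inr ⟨i, funext fun j => ?_⟩
  rcases eq_or_ne j i with rfl | hj
  · rw [Pi.single_eq_same, hfi]
  · rw [Pi.single_eq_of_ne hj]
    exact (Finset.sum_eq_zero_iff_of_nonneg fun j _ => hf' j).mp hrest j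
      (Finset.mem_erase.mpr ⟨hj, Finset.mem_univ j⟩)

lemma sum_indZ (S : Finset E) : ∑ e, indZ S e = S.card := by
  simp [indZ]

lemma indZ_compl_eq_indZ_compl_insert_add_single {S : Finset E} {i : E} (hi : i ∉ S) :
    indZ Sᶜ = indZ (insert i S)ᶜ + Pi.single i 1 := by
  ext e
  rcases eq_or_ne e i with rfl | he
  · simp [indZ, hi]
  · simp [indZ, he]

lemma indZ_compl_le {x : E → ℤ} (hx : 0 ≤ x) {S : Finset E} (hS : ∀ e, x e = 0 → e ∈ S) :
    indZ Sᶜ ≤ x := by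
  intro e
  have : 0 ≤ x e := hx e
  simp only [indZ, Finset.mem_compl]
  split_ifs with he
  · exact this
  · have := mt (hS e) he
    omega

section SpanningTrees

variable {G : E → Sym2 V}

lemma nonneg_of_cycleRank_le_sum {x : E → ℤ}
    (hx : ∀ A, cycleRank G (spanningSub G A) ≤ ∑ e ∈ A, x e) : 0 ≤ x := by
  intro e
  have h := hx {e}
  have := natCard_le_numComps_add_card (G := G) {e}
  simp only [cycleRank_spanningSub, Finset.card_singleton, Finset.sum_singleton] at h this
  simp only [Pi.zero_apply]
  omega

lemma exists_isSpanningTree_insert (hconn : numComps G Finset.univ = 1) {S : Finset E}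
    (hS : numComps G S = 2) (hcard : S.card + 2 = Nat.card V) :
    ∃ i ∉ S, IsSpanningTree G (insert i S) := by
  obtain ⟨i, hi⟩ := exists_numComps_insert_lt (G := G) (A := S) (by omega)
  have hiS : i ∉ S := fun h => (Finset.insert_eq_of_mem h ▸ hi).false
  have := numComps_anti (G := G) (Finset.subset_univ (insert i S))
  refine ⟨i, hiS, isSpanningTree_iff.mpr ⟨?_, by omega⟩⟩
  rw [Finset.card_insert_of_notMem hiS]
  omega

lemma zeroSet_isSpanningTree_or_numComps_eq_two (hconn : numComps G Finset.univ = 1)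
    {x : E → ℤ} (hlow : ∀ A, cycleRank G (spanningSub G A) ≤ ∑ e ∈ A, x e)
    (hup : ∑ e, x e ≤ cycleRank G (spanningSub G Finset.univ) + 1)
    {S : Finset E} (hS : ∀ e, e ∈ S ↔ x e = 0) :
    (IsSpanningTree G S ∧ (x = indZ Sᶜ ∨ ∃ i, x = indZ Sᶜ + Pi.single i 1)) ∨
      (numComps G S = 2 ∧ S.card + 2 = Nat.card V ∧ x = indZ Sᶜ) := by
  have hD : 0 ≤ x - indZ Sᶜ :=
    sub_nonneg.mpr (indZ_compl_le (nonneg_of_cycleRank_le_sum hlow) fun e => (hS e).mpr)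
  have hDsum : 0 ≤ ∑ e, (x - indZ Sᶜ) e := Finset.sum_nonneg fun e _ => hD e
  have hsum : ∑ e, x e = Sᶜ.card + ∑ e, (x - indZ Sᶜ) e := by
    simp only [Pi.sub_apply, Finset.sum_sub_distrib, sum_indZ, add_sub_cancel]
  have hforest : cycleRank G (spanningSub G S) ≤ 0 :=
    (hlow S).trans_eq (Finset.sum_eq_zero fun e he => (hS e).mp he)
  have hnonneg := natCard_le_numComps_add_card (G := G) S
  have hconnS := numComps_anti (G := G) (Finset.subset_univ S)
  have hcard := Finset.card_add_card_compl S
  rw [cycleRank_spanningSub] at hforest hup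
  rw [hconn, Finset.card_univ] at hup
  rw [hconn] at hconnS
  obtain ⟨hc1, hD1⟩ | ⟨hc2, hD0, hcard2⟩ :
      numComps G S = 1 ∧ ∑ e, (x - indZ Sᶜ) e ≤ 1 ∨
      numComps G S = 2 ∧ ∑ e, (x - indZ Sᶜ) e = 0 ∧ S.card + 2 = Nat.card V := by
    omega
  · refine Or.inl ⟨isSpanningTree_iff.mpr ⟨by omega, hc1⟩, ?_⟩
    rcases eq_zero_or_exists_eq_single_of_sum_le_one hD hD1 with hD0 | ⟨i, hDi⟩
    exacts [Or.inl (sub_eq_zero.mp hD0), Or.inr ⟨i, sub_eq_iff_eq_add'.mp hDi⟩]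
  · refine Or.inr ⟨hc2, hcard2, sub_eq_zero.mp (funext fun e => ?_)⟩
    exact (Finset.sum_eq_zero_iff_of_nonneg fun e _ => hD e).mp hD0 e (Finset.mem_univ e)

end SpanningTrees

/-- Every integer point of the polytope `P'_Γ` is the incidence vector of the
complement of a spanning tree, or such an incidence vector plus a standard basis
vector. -/
theorem integer_points_of_polytope (G : E → Sym2 V) (hconn : GraphConnected G)
    (x : E → ℤ)
    (hx : (∀ γ : Subgraph G, (cycleRank G γ : ℝ) ≤ ∑ e ∈ γ.edges, (x e : ℝ)) ∧
      ∑ e, (x e : ℝ) ≤ (cycleRank G (spanningSub G Finset.univ) : ℝ) + 1) :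
    (∃ T, IsSpanningTree G T ∧ x = indZ Tᶜ) ∨
    (∃ T, ∃ i : E, IsSpanningTree G T ∧ x = indZ Tᶜ + Pi.single i 1) := by
  rw [GraphConnected, comps_spanningSub] at hconn
  have hlow (A : Finset E) : cycleRank G (spanningSub G A) ≤ ∑ e ∈ A, x e := by
    exact_mod_cast hx.1 (spanningSub G A)
  have hup : ∑ e, x e ≤ cycleRank G (spanningSub G Finset.univ) + 1 := by exact_mod_cast hx.2
  rcases zeroSet_isSpanningTree_or_numComps_eq_two hconn hlow hup
      (S := Finset.univ.filter (x · = 0)) (by simp) with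
    ⟨hT, hxT | ⟨i, hxT⟩⟩ | ⟨hc2, hcard, hxS⟩
  · exact Or.inl ⟨_, hT, hxT⟩
  · exact Or.inr ⟨_, i, hT, hxT⟩
  · obtain ⟨i, hiS, hT⟩ := exists_isSpanningTree_insert hconn hc2 hcard
    exact Or.inr ⟨_, i, hT, hxS.trans (indZ_compl_eq_indZ_compl_insert_add_single hiS)⟩
end
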